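/- arXiv:2111.11314 — 2 statements merged into one kernel-verified Lean document; each statement's English description precedes it below -/
import Mathlib

section
/- Suppose the total likelihood L = Σ_z W(z) is strictly positive, and define the posterior probability mass function p z = W(z) / L on paths. Then for every 0 ≤ t ≤ T and every k ∈ Fin K, the posterior state marginal satisfies Σ_{z : z t = k} p z = α t k · β t k / L. -/
/-!
With `G s k' k = φ s k' k * e s k` the path weight is `π (z 0) * ∏ G (s+1) (z s) (z (s+1))`.
Splitting off the last state of a path turns a terminal weight `w` into
`fun k' => ∑ k, G n k' k * w k`, so by induction on the path length `n` the weighted path sum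
`∑ z, π (z 0) * ∏ G … * w (z n)` equals `∑ k, α n k * w k`. For the marginal at `t < n` the
same step leaves the constraint `z t = k` untouched and, by the backward recursion, replaces the
terminal weight `β n` by `β (n - 1)`; this reduces `t` to the terminal time, where taking
`w = 𝟙{k} * β t` in the forward identity gives `α t k * β t k`.
-/

open Finset

theorem Fin.sum_univ_pi_eq_sum_sum_snoc {ι M : Type*} [Fintype ι] [AddCommMonoid M] {n : ℕ}
    (F : (Fin (n + 1) → ι) → M) :
    ∑ z, F z = ∑ z : Fin n → ι, ∑ a, F (Fin.snoc z a) := by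
  rw [← (Fin.snocEquiv fun _ => ι).sum_comp, Fintype.sum_prod_type, Finset.sum_comm]
  rfl

section PathWeight

variable {ι R : Type*} [CommSemiring R]

def pathWeight (G : ℕ → ι → ι → R) (n : ℕ) (z : Fin (n + 1) → ι) : R :=
  ∏ s : Fin n, G (s + 1) (z s.castSucc) (z s.succ)

theorem pathWeight_zero (G : ℕ → ι → ι → R) (z : Fin 1 → ι) : pathWeight G 0 z = 1 :=
  Finset.prod_empty

theorem pathWeight_snoc (G : ℕ → ι → ι → R) (n : ℕ) (z : Fin (n + 1) → ι) (a : ι) :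
    pathWeight G (n + 1) (Fin.snoc z a) = pathWeight G n z * G (n + 1) (z (Fin.last n)) a := by
  simp only [pathWeight, Fin.prod_univ_castSucc, Fin.val_castSucc, Fin.val_last,
    Fin.succ_last, Fin.snoc_last, Fin.succ_castSucc, Fin.snoc_castSucc]

variable [Fintype ι]

theorem sum_mul_pathWeight_succ (G : ℕ → ι → ι → R) (n : ℕ) (f : (Fin (n + 1) → ι) → R)
    (w : ι → R) :
    ∑ z : Fin (n + 2) → ι, f (Fin.init z) * pathWeight G (n + 1) z * w (z (Fin.last (n + 1)))
      = ∑ z : Fin (n + 1) → ι, f z * pathWeight G n z * ∑ a, G (n + 1) (z (Fin.last n)) a * w a := by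
  rw [Fin.sum_univ_pi_eq_sum_sum_snoc]
  refine sum_congr rfl fun z _ => ?_
  simp only [Fin.init_snoc, pathWeight_snoc, Fin.snoc_last, mul_sum]
  exact sum_congr rfl fun a _ => by ring

theorem sum_mul_pathWeight_mul_last (G : ℕ → ι → ι → R) (u : ι → R) (α : ℕ → ι → R)
    (hα0 : ∀ k, α 0 k = u k) (n : ℕ)
    (hαrec : ∀ s < n, ∀ k, α (s + 1) k = ∑ k', G (s + 1) k' k * α s k') (w : ι → R) :
    ∑ z : Fin (n + 1) → ι, u (z 0) * pathWeight G n z * w (z (Fin.last n))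
      = ∑ k, α n k * w k := by
  induction n generalizing w with
  | zero =>
    rw [← (Equiv.funUnique (Fin 1) ι).symm.sum_comp]
    simp [pathWeight_zero, hα0]
  | succ n ih =>
    calc ∑ z : Fin (n + 2) → ι, u (z 0) * pathWeight G (n + 1) z * w (z (Fin.last (n + 1)))
        = ∑ z : Fin (n + 1) → ι, u (z 0) * pathWeight G n z
          * ∑ a, G (n + 1) (z (Fin.last n)) a * w a :=
          sum_mul_pathWeight_succ G n (fun y => u (y 0)) w
      _ = ∑ k, α n k * ∑ a, G (n + 1) k a * w a :=
          ih (fun s hs => hαrec s (by omega)) fun k => ∑ a, G (n + 1) k a * w a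
      _ = ∑ a, α (n + 1) a * w a := by
          simp only [hαrec n (lt_add_one n), mul_sum, sum_mul]
          rw [sum_comm]
          exact sum_congr rfl fun _ _ => sum_congr rfl fun _ _ => by ring

theorem sum_filter_last_mul_pathWeight_mul_last [DecidableEq ι] (G : ℕ → ι → ι → R)
    (u : ι → R) (α : ℕ → ι → R) (hα0 : ∀ k, α 0 k = u k) (n : ℕ)
    (hαrec : ∀ s < n, ∀ k, α (s + 1) k = ∑ k', G (s + 1) k' k * α s k') (v : ι → R) (k : ι) :
    ∑ z ∈ univ.filter (fun z : Fin (n + 1) → ι => z (Fin.last n) = k),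
        u (z 0) * pathWeight G n z * v (z (Fin.last n))
      = α n k * v k := by
  have h := sum_mul_pathWeight_mul_last G u α hα0 n hαrec fun j => if j = k then v j else 0
  simpa only [sum_filter, mul_ite, mul_zero, sum_ite_eq', mem_univ, if_true] using h

theorem sum_filter_mul_pathWeight_mul_last [DecidableEq ι] (G : ℕ → ι → ι → R) (u : ι → R)
    (α β : ℕ → ι → R) (hα0 : ∀ k, α 0 k = u k) (n : ℕ)
    (hαrec : ∀ s < n, ∀ k, α (s + 1) k = ∑ k', G (s + 1) k' k * α s k')
    (hβrec : ∀ s < n, ∀ k, β s k = ∑ k', G (s + 1) k k' * β (s + 1) k')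
    (t : ℕ) (ht : t ≤ n) (k : ι) :
    ∑ z ∈ univ.filter (fun z : Fin (n + 1) → ι => z ⟨t, Nat.lt_succ_of_le ht⟩ = k),
        u (z 0) * pathWeight G n z * β n (z (Fin.last n))
      = α t k * β t k := by
  induction n with
  | zero =>
    obtain rfl : t = 0 := by omega
    exact sum_filter_last_mul_pathWeight_mul_last G u α hα0 0 hαrec (β 0) k
  | succ n ih =>
    rcases Nat.lt_or_eq_of_le ht with hlt | rfl
    · calc _ = ∑ z : Fin (n + 2) → ι, (if z ⟨t, by omega⟩ = k then u (z 0) else 0)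
              * pathWeight G (n + 1) z * β (n + 1) (z (Fin.last (n + 1))) := by
            simp only [sum_filter, ite_mul, zero_mul]
        _ = ∑ z : Fin (n + 1) → ι, (if z ⟨t, hlt⟩ = k then u (z 0) else 0)
              * pathWeight G n z * β n (z (Fin.last n)) := by
            refine (sum_mul_pathWeight_succ G n
              (fun y => if y ⟨t, hlt⟩ = k then u (y 0) else 0) (β (n + 1))).trans ?_
            simp only [hβrec n (lt_add_one n)]
        _ = α t k * β t k := by
            rw [← ih (fun s hs => hαrec s (by omega)) (fun s hs => hβrec s (by omega)) (by omega)]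
            simp only [sum_filter, ite_mul, zero_mul]
    · exact sum_filter_last_mul_pathWeight_mul_last G u α hα0 (n + 1) hαrec (β (n + 1)) k

end PathWeight

theorem stmt_6_general (K T : ℕ)
    (pi0 : Fin K → ℝ) (φ : ℕ → Fin K → Fin K → ℝ) (e : ℕ → Fin K → ℝ)
    (α : ℕ → Fin K → ℝ)
    (hα0 : ∀ k, α 0 k = pi0 k)
    (hαrec : ∀ t, 1 ≤ t → t ≤ T → ∀ k : Fin K,
      α t k = e t k * ∑ k' : Fin K, φ t k' k * α (t - 1) k')
    (β : ℕ → Fin K → ℝ)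
    (hβT : ∀ k, β T k = 1)
    (hβrec : ∀ t, t < T → ∀ k : Fin K,
      β t k = ∑ k' : Fin K, φ (t + 1) k k' * e (t + 1) k' * β (t + 1) k')
    (W : (Fin (T + 1) → Fin K) → ℝ)
    (hW : ∀ z, W z = pi0 (z 0) *
      ∏ s : Fin T, φ (↑s + 1) (z s.castSucc) (z s.succ) * e (↑s + 1) (z s.succ))
    (L : ℝ)
    (p : (Fin (T + 1) → Fin K) → ℝ) (hp : ∀ z, p z = W z / L) :
    ∀ t, ∀ ht : t ≤ T, ∀ k : Fin K,
      ∑ z ∈ Finset.univ.filter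
          (fun z : Fin (T + 1) → Fin K => z ⟨t, Nat.lt_succ_of_le ht⟩ = k), p z
        = α t k * β t k / L := by
  intro t ht k
  set G : ℕ → Fin K → Fin K → ℝ := fun s k' k => φ s k' k * e s k
  have hW' : ∀ z, W z = pi0 (z 0) * pathWeight G T z * β T (z (Fin.last T)) := by
    intro z
    rw [hW, hβT, mul_one]
    rfl
  have hαrec' : ∀ s < T, ∀ k, α (s + 1) k = ∑ k', G (s + 1) k' k * α s k' := by
    intro s hs k
    rw [hαrec (s + 1) (by omega) hs k, Nat.add_sub_cancel, mul_sum]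
    exact sum_congr rfl fun k' _ => by ring
  simp only [hp, ← sum_div, hW']
  rw [sum_filter_mul_pathWeight_mul_last G pi0 α β hα0 T hαrec' hβrec t ht k]

/-- when the total likelihood `L` is positive, the posterior state
marginal of the posterior pmf `p z = W(z)/L` satisfies
`Σ_{z : z t = k} p z = α t k · β t k / L`. -/
theorem stmt_6 (K T : ℕ) (hK : 1 ≤ K) (hT : 1 ≤ T)
    (pi0 : Fin K → ℝ) (φ : ℕ → Fin K → Fin K → ℝ) (e : ℕ → Fin K → ℝ)
    (hπ : ∀ k, 0 ≤ pi0 k)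
    (hφ : ∀ t k' k, 0 ≤ φ t k' k)
    (he : ∀ t k, 0 ≤ e t k)
    (α : ℕ → Fin K → ℝ)
    (hα0 : ∀ k, α 0 k = pi0 k)
    (hαrec : ∀ t, 1 ≤ t → t ≤ T → ∀ k : Fin K,
      α t k = e t k * ∑ k' : Fin K, φ t k' k * α (t - 1) k')
    (β : ℕ → Fin K → ℝ)
    (hβT : ∀ k, β T k = 1)
    (hβrec : ∀ t, t < T → ∀ k : Fin K,
      β t k = ∑ k' : Fin K, φ (t + 1) k k' * e (t + 1) k' * β (t + 1) k')
    (W : (Fin (T + 1) → Fin K) → ℝ)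
    (hW : ∀ z, W z = pi0 (z 0) *
      ∏ s : Fin T, φ (↑s + 1) (z s.castSucc) (z s.succ) * e (↑s + 1) (z s.succ))
    (L : ℝ) (hL : L = ∑ z : Fin (T + 1) → Fin K, W z) (hLpos : 0 < L)
    (p : (Fin (T + 1) → Fin K) → ℝ) (hp : ∀ z, p z = W z / L) :
    ∀ t, ∀ ht : t ≤ T, ∀ k : Fin K,
      ∑ z ∈ Finset.univ.filter
          (fun z : Fin (T + 1) → Fin K => z ⟨t, Nat.lt_succ_of_le ht⟩ = k), p z
        = α t k * β t k / L :=
  stmt_6_general K T pi0 φ e α hα0 hαrec β hβT hβrec W hW L p hp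
end

section
/- Suppose the total likelihood L = Σ_z W(z) is strictly positive, and define the posterior probability mass function p z = W(z) / L on paths. Then for every 1 ≤ t ≤ T and all k', k ∈ Fin K, the posterior pairwise marginal (the E-step quantity of the EM algorithm) satisfies Σ_{z : z (t−1) = k', z t = k} p z = α (t−1) k' · φ t k' k · e t k · β t k / L. -/
/-!
Pinning step `t` of the chain to the transition `k' → k` (zeroing every other entry of that
step's weight matrix) turns the restricted sum of path weights into the total weight of a modified
chain. The total weight of a chain equals `∑ k, α s k * β s k` for every `s`, because this pairing
is invariant under one step of the two recursions. At `s = t` the pinned forward vector is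
supported on `k`, with value `α (t - 1) k' * φ t k' k * e t k`, while `β t` only sees the steps
after `t` and is unaffected by the pinning.
-/

open Finset

namespace HMM

variable {R ι : Type*} [CommSemiring R]

def pathWeight (w : ℕ → ι → ι → R) {n : ℕ} (z : Fin (n + 1) → ι) : R :=
  ∏ s : Fin n, w (s + 1) (z s.castSucc) (z s.succ)

theorem pathWeight_snoc (w : ℕ → ι → ι → R) {n : ℕ} (y : Fin (n + 1) → ι) (a : ι) :
    pathWeight w (Fin.snoc y a : Fin (n + 2) → ι) =
      pathWeight w y * w (n + 1) (y (Fin.last n)) a := by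
  rw [pathWeight, Fin.prod_univ_castSucc]
  simp only [Fin.succ_castSucc, Fin.snoc_castSucc, Fin.succ_last, Fin.snoc_last, Fin.val_castSucc,
    Fin.val_last]
  rfl

theorem sum_fun_fin_succ_eq_sum_snoc [Fintype ι] {M : Type*} [AddCommMonoid M] {n : ℕ}
    (f : (Fin (n + 1) → ι) → M) :
    ∑ z, f z = ∑ y : Fin n → ι, ∑ a, f (Fin.snoc y a) := by
  rw [← (Fin.snocEquiv fun _ => ι).sum_comp, Fintype.sum_prod_type_right]
  rfl

def forward [Fintype ι] (w : ℕ → ι → ι → R) (v : ι → R) : ℕ → ι → R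
  | 0 => v
  | t + 1 => fun k => ∑ k', forward w v t k' * w (t + 1) k' k

theorem sum_pathWeight_last_eq_forward [Fintype ι] [DecidableEq ι] (w : ℕ → ι → ι → R)
    (v : ι → R) (n : ℕ) (k : ι) :
    ∑ z : Fin (n + 1) → ι with z (Fin.last n) = k, v (z 0) * pathWeight w z = forward w v n k := by
  induction n generalizing k with
  | zero =>
    rw [sum_filter, ← (Equiv.funUnique (Fin 1) ι).symm.sum_comp]
    simp [pathWeight, forward]
  | succ n ih =>
    calc ∑ z : Fin (n + 2) → ι with z (Fin.last _) = k, v (z 0) * pathWeight w z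
        = ∑ y : Fin (n + 1) → ι, v (y 0) * pathWeight w y * w (n + 1) (y (Fin.last n)) k := by
          rw [sum_filter, sum_fun_fin_succ_eq_sum_snoc]
          simp only [Fin.snoc_last, Fin.snoc_apply_zero, pathWeight_snoc, sum_ite_eq', mem_univ,
            if_true, mul_assoc]
      _ = ∑ k', ∑ y : Fin (n + 1) → ι with y (Fin.last n) = k',
            v (y 0) * pathWeight w y * w (n + 1) (y (Fin.last n)) k := (sum_fiberwise ..).symm
      _ = forward w v (n + 1) k := by
          refine sum_congr rfl fun k' _ => ?_
          rw [← ih, sum_mul]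
          exact sum_congr rfl fun y hy => by rw [(mem_filter.1 hy).2]

theorem sum_forward_mul_backward_succ [Fintype ι] (w : ℕ → ι → ι → R) (v : ι → R)
    (β : ℕ → ι → R) (t : ℕ) (hβ : ∀ i, β t i = ∑ j, w (t + 1) i j * β (t + 1) j) :
    ∑ j, forward w v (t + 1) j * β (t + 1) j = ∑ i, forward w v t i * β t i := by
  simp only [forward, hβ, sum_mul, mul_sum, mul_assoc]
  exact sum_comm

theorem sum_forward_mul_backward_eq_of_le [Fintype ι] (w : ℕ → ι → ι → R) (v : ι → R)
    (β : ℕ → ι → R) {s n : ℕ} (hsn : s ≤ n)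
    (hβ : ∀ t, s ≤ t → t < n → ∀ i, β t i = ∑ j, w (t + 1) i j * β (t + 1) j) :
    ∑ k, forward w v n k * β n k = ∑ k, forward w v s k * β s k := by
  induction n, hsn using Nat.le_induction with
  | base => rfl
  | succ n hsn ih =>
    rw [sum_forward_mul_backward_succ w v β n (hβ n hsn n.lt_succ_self),
      ih fun t hst htn => hβ t hst (htn.trans n.lt_succ_self)]

theorem sum_pathWeight_eq_sum_forward_mul_backward [Fintype ι] [DecidableEq ι]
    (w : ℕ → ι → ι → R) (v : ι → R) (β : ℕ → ι → R) {s n : ℕ} (hsn : s ≤ n) (hβn : ∀ k, β n k = 1)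
    (hβ : ∀ t, s ≤ t → t < n → ∀ i, β t i = ∑ j, w (t + 1) i j * β (t + 1) j) :
    ∑ z : Fin (n + 1) → ι, v (z 0) * pathWeight w z = ∑ k, forward w v s k * β s k := by
  rw [← sum_forward_mul_backward_eq_of_le w v β hsn hβ,
    ← sum_fiberwise univ fun z => z (Fin.last n)]
  simp only [hβn, mul_one, sum_pathWeight_last_eq_forward]

def pinTransition [DecidableEq ι] (w : ℕ → ι → ι → R) (t : ℕ) (a b : ι) : ℕ → ι → ι → R :=
  Function.update w t fun i j => if i = a ∧ j = b then w t i j else 0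

theorem pathWeight_pinTransition [DecidableEq ι] (w : ℕ → ι → ι → R) {n : ℕ} (i : Fin n)
    (a b : ι) (z : Fin (n + 1) → ι) :
    pathWeight (pinTransition w (i + 1) a b) z =
      if z i.castSucc = a ∧ z i.succ = b then pathWeight w z else 0 := by
  split_ifs with hz
  · refine prod_congr rfl fun s _ => ?_
    obtain rfl | hs := eq_or_ne s i
    · simp [pinTransition, hz]
    · rw [pinTransition, Function.update_of_ne (by simpa [Fin.val_eq_val] using hs)]
  · exact prod_eq_zero (mem_univ i) (by simp [pinTransition, hz])

theorem forward_pinTransition_of_le [Fintype ι] [DecidableEq ι] (w : ℕ → ι → ι → R) (v : ι → R)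
    {t u : ℕ} (htu : t ≤ u) (a b : ι) :
    forward (pinTransition w (u + 1) a b) v t = forward w v t := by
  induction t with
  | zero => rfl
  | succ t ih =>
    funext k
    simp only [forward, ih (by omega)]
    rw [pinTransition, Function.update_of_ne (by omega)]

theorem forward_pinTransition_succ [Fintype ι] [DecidableEq ι] (w : ℕ → ι → ι → R) (v : ι → R)
    (u : ℕ) (a b k : ι) :
    forward (pinTransition w (u + 1) a b) v (u + 1) k =
      if k = b then forward w v u a * w (u + 1) a b else 0 := by
  rw [forward, forward_pinTransition_of_le w v le_rfl]
  by_cases hk : k = b <;> simp [pinTransition, hk]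

theorem sum_pathWeight_transition_eq [Fintype ι] [DecidableEq ι] (w : ℕ → ι → ι → R)
    (v : ι → R) (β : ℕ → ι → R) {n : ℕ} (hβn : ∀ k, β n k = 1)
    (hβ : ∀ t < n, ∀ i, β t i = ∑ j, w (t + 1) i j * β (t + 1) j) (i : Fin n) (a b : ι) :
    ∑ z : Fin (n + 1) → ι with z i.castSucc = a ∧ z i.succ = b, v (z 0) * pathWeight w z =
      forward w v i a * w (i + 1) a b * β (i + 1) b := by
  calc _ = ∑ z : Fin (n + 1) → ι, v (z 0) * pathWeight (pinTransition w (i + 1) a b) z := by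
        simp only [sum_filter, pathWeight_pinTransition, mul_ite, mul_zero]
    _ = ∑ k, forward (pinTransition w (i + 1) a b) v (i + 1) k * β (i + 1) k := by
        refine sum_pathWeight_eq_sum_forward_mul_backward _ v β i.isLt hβn fun t hit htn => ?_
        simp only [pinTransition, Function.update_of_ne (by omega : t + 1 ≠ i + 1)]
        exact hβ t htn
    _ = _ := by simp [forward_pinTransition_succ]

end HMM

open HMM

/-- when the total likelihood `L` is positive, the posterior
pairwise marginal (the E-step quantity of the EM algorithm) satisfies
`Σ_{z : z (t−1) = k', z t = k} p z = α (t−1) k' · φ t k' k · e t k · β t k / L`. -/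
theorem stmt_7 (K T : ℕ)
    (pi0 : Fin K → ℝ) (φ : ℕ → Fin K → Fin K → ℝ) (e : ℕ → Fin K → ℝ)
    (α : ℕ → Fin K → ℝ)
    (hα0 : ∀ k, α 0 k = pi0 k)
    (hαrec : ∀ t, 1 ≤ t → t ≤ T → ∀ k : Fin K,
      α t k = e t k * ∑ k' : Fin K, φ t k' k * α (t - 1) k')
    (β : ℕ → Fin K → ℝ)
    (hβT : ∀ k, β T k = 1)
    (hβrec : ∀ t, t < T → ∀ k : Fin K,
      β t k = ∑ k' : Fin K, φ (t + 1) k k' * e (t + 1) k' * β (t + 1) k')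
    (W : (Fin (T + 1) → Fin K) → ℝ)
    (hW : ∀ z, W z = pi0 (z 0) *
      ∏ s : Fin T, φ (↑s + 1) (z s.castSucc) (z s.succ) * e (↑s + 1) (z s.succ))
    (L : ℝ)
    (p : (Fin (T + 1) → Fin K) → ℝ) (hp : ∀ z, p z = W z / L) :
    ∀ t, ∀ ht1 : 1 ≤ t, ∀ ht : t ≤ T, ∀ k' k : Fin K,
      ∑ z ∈ Finset.univ.filter
          (fun z : Fin (T + 1) → Fin K =>
            z ⟨t - 1, by omega⟩ = k' ∧ z ⟨t, Nat.lt_succ_of_le ht⟩ = k), p z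
        = α (t - 1) k' * φ t k' k * e t k * β t k / L := by
  intro t ht1 ht k' k
  let w : ℕ → Fin K → Fin K → ℝ := fun s a b => φ s a b * e s b
  have hα : ∀ s ≤ T, α s = forward w pi0 s := by
    intro s hs
    induction s with
    | zero => exact funext hα0
    | succ s ih =>
      funext k
      rw [hαrec (s + 1) s.succ_pos hs, Nat.add_sub_cancel, ih (by omega), forward, mul_sum]
      exact sum_congr rfl fun _ _ => by ring
  obtain ⟨u, rfl⟩ : ∃ u, t = u + 1 := ⟨t - 1, by omega⟩
  let i : Fin T := ⟨u, by omega⟩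
  calc _ = (∑ z : Fin (T + 1) → Fin K with z i.castSucc = k' ∧ z i.succ = k,
        pi0 (z 0) * pathWeight w z) / L := by
        rw [sum_div]
        exact sum_congr rfl fun z _ => by rw [hp, hW]; rfl
    _ = _ := by
        rw [sum_pathWeight_transition_eq w pi0 β hβT hβrec, Nat.add_sub_cancel, hα u (by omega)]
        simp only [w, i, mul_assoc]
end
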